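/- Let v = (v₁,v₂,v₃) : [0, π/2] → ℝ³ be continuously differentiable on [0, π/2] and twice continuously differentiable on (0, π/2), with ‖v(θ)‖ = 1 for all θ ∈ [0, π/2]. Suppose v satisfies, for all θ ∈ (0, π/2), the system −(d/dθ)(sin θ · v′(θ)) + (1/sin θ)·(4v₁(θ), 0, v₃(θ)) = (‖v′(θ)‖²·sin θ + (4v₁(θ)² + v₃(θ)²)/sin θ)·v(θ), and that v₁(π/2) = v₃(π/2) = 0. Then v is constant on [0, π/2], and v ≡ (0,1,0) or v ≡ (0,−1,0). -/

import Mathlib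

open Set Real

open Filter Topology
open scoped RealInnerProductSpace

/-- The point of `ℝ³` (with the Euclidean norm) with coordinates `(a, b, c)`. -/
noncomputable def vec3 (a b c : ℝ) : EuclideanSpace ℝ (Fin 3) := WithLp.toLp 2 ![a, b, c]

lemma inner_vec3_left (a b c : ℝ) (x : EuclideanSpace ℝ (Fin 3)) :
    ⟪vec3 a b c, x⟫ = a * x 0 + b * x 1 + c * x 2 := by
  simp [PiLp.inner_apply, Fin.sum_univ_three, vec3]
  ring

lemma abs_coord_le (x : EuclideanSpace ℝ (Fin 3)) (i : Fin 3) : |x i| ≤ ‖x‖ := by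
  rw [EuclideanSpace.norm_eq, ← Real.sqrt_sq_eq_abs]
  apply Real.sqrt_le_sqrt
  refine (Finset.single_le_sum (f := fun j => ‖x j‖^2) (fun j _ => by positivity)
    (Finset.mem_univ i)).trans_eq' ?_
  simp [sq_abs]

lemma norm_vec3_eq (a b c : ℝ) : ‖vec3 a b c‖ = Real.sqrt (a^2 + b^2 + c^2) := by
  rw [EuclideanSpace.norm_eq]
  congr 1
  simp [Fin.sum_univ_three, vec3, sq_abs]

lemma norm_vec3_le (a c : ℝ) : ‖vec3 a 0 c‖ ≤ |a| + |c| := by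
  rw [norm_vec3_eq]
  have h : a^2 + 0^2 + c^2 ≤ (|a| + |c|)^2 := by
    nlinarith [sq_abs a, sq_abs c, mul_nonneg (abs_nonneg a) (abs_nonneg c)]
  calc Real.sqrt (a^2+0^2+c^2) ≤ Real.sqrt ((|a|+|c|)^2) := Real.sqrt_le_sqrt h
    _ = |a| + |c| := Real.sqrt_sq (by positivity)

lemma hasDerivAt_coord {f : ℝ → EuclideanSpace ℝ (Fin 3)} {f' : EuclideanSpace ℝ (Fin 3)} {t : ℝ}
    (h : HasDerivAt f f' t) (i : Fin 3) : HasDerivAt (fun s => f s i) (f' i) t := by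
  exact (EuclideanSpace.proj (𝕜 := ℝ) i).hasFDerivAt.comp_hasDerivAt t h

lemma lam_bound (dvn sθ s₀ a c dn un M : ℝ)
    (hsθ : 0 < sθ) (hs₀ : 0 < s₀) (hss : s₀ ≤ sθ)
    (hnu : un = sθ * dvn) (hdvn : 0 ≤ dvn)
    (hdv : dvn ≤ s₀⁻¹ * un) (huM : un ≤ M)
    (ha : |a| ≤ dn) (hc : |c| ≤ dn) (hd2 : dn ≤ 2) :
    dvn^2 * sθ + (4*a^2 + c^2)/sθ ≤ s₀⁻¹ * (M * un + 10 * dn) := by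
  have hi : 0 ≤ s₀⁻¹ := inv_nonneg.2 hs₀.le
  have hun : 0 ≤ un := hnu ▸ mul_nonneg hsθ.le hdvn
  have hA : dvn^2 * sθ ≤ s₀⁻¹ * (M * un) := by
    have he : dvn^2 * sθ = dvn * un := by rw [hnu]; ring
    rw [he]
    calc dvn * un ≤ (s₀⁻¹ * un) * un := mul_le_mul_of_nonneg_right hdv hun
      _ ≤ (s₀⁻¹ * M) * un := by
          apply mul_le_mul_of_nonneg_right _ hun
          exact mul_le_mul_of_nonneg_left huM hi
      _ = s₀⁻¹ * (M * un) := by ring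
  have hdn : 0 ≤ dn := (abs_nonneg a).trans ha
  have h8 : 4*a^2 + c^2 ≤ 10 * dn := by
    nlinarith [sq_abs a, sq_abs c, mul_self_le_mul_self (abs_nonneg a) ha,
      mul_self_le_mul_self (abs_nonneg c) hc]
  have h9 : (4*a^2 + c^2)/sθ ≤ s₀⁻¹ * (10 * dn) := by
    rw [div_le_iff₀ hsθ]
    have h3 : (1:ℝ) ≤ s₀⁻¹ * sθ := by
      rw [inv_mul_eq_div, le_div_iff₀ hs₀, one_mul]; exact hss
    nlinarith
  rw [mul_add]
  linarith

lemma gd_bound (w vv : EuclideanSpace ℝ (Fin 3)) (sθ s₀ lam M dn un gn : ℝ)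
    (hsθ : 0 < sθ) (hs₀ : 0 < s₀) (hss : s₀ ≤ sθ) (hlam0 : 0 ≤ lam)
    (hw : ‖w‖ ≤ 5 * dn) (hvv : ‖vv‖ = 1)
    (hlam : lam ≤ s₀⁻¹ * (M * un + 10 * dn))
    (hdn : 0 ≤ dn) (hun : 0 ≤ un) (hM0 : 0 ≤ M) (hgn : 0 ≤ gn)
    (hd_g : dn ≤ gn) (hu_g : un ≤ gn) :
    ‖sθ⁻¹ • w - lam • vv‖ ≤ (s₀⁻¹ * (16 + M)) * gn := by
  have hi : 0 ≤ s₀⁻¹ := inv_nonneg.2 hs₀.le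
  have hii : sθ⁻¹ ≤ s₀⁻¹ := inv_anti₀ hs₀ hss
  calc ‖sθ⁻¹ • w - lam • vv‖ ≤ ‖sθ⁻¹ • w‖ + ‖lam • vv‖ := norm_sub_le _ _
    _ = sθ⁻¹ * ‖w‖ + lam := by
        rw [norm_smul, norm_smul, Real.norm_eq_abs, Real.norm_eq_abs,
          abs_of_pos (inv_pos.2 hsθ), abs_of_nonneg hlam0, hvv, mul_one]
    _ ≤ s₀⁻¹ * (5 * dn) + s₀⁻¹ * (M * un + 10 * dn) := by
        have h1 : sθ⁻¹ * ‖w‖ ≤ s₀⁻¹ * (5 * dn) := by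
          have h0 : 0 ≤ ‖w‖ := norm_nonneg _
          nlinarith
        linarith
    _ ≤ (s₀⁻¹ * (16 + M)) * gn := by
        have e1 := mul_le_mul_of_nonneg_left hd_g hi
        have e2 := mul_le_mul_of_nonneg_left hu_g hi
        have e3 := mul_le_mul_of_nonneg_left (mul_le_mul_of_nonneg_left hu_g hM0) hi
        nlinarith

lemma gd_bound1 (dv : EuclideanSpace ℝ (Fin 3)) (s₀ M un gn : ℝ)
    (hs₀ : 0 < s₀) (hdv : ‖dv‖ ≤ s₀⁻¹ * un) (hu_g : un ≤ gn) (hM0 : 0 ≤ M) (hgn : 0 ≤ gn) :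
    ‖dv‖ ≤ (s₀⁻¹ * (16 + M)) * gn := by
  have hi : 0 ≤ s₀⁻¹ := inv_nonneg.2 hs₀.le
  have e1 := mul_le_mul_of_nonneg_left hu_g hi
  nlinarith [norm_nonneg dv]

set_option maxHeartbeats 1000000 in
/-- A unit-vector solution `v` of the tangent-map ODE system on `(0, π/2)` which
is `C¹` up to the boundary and satisfies `v₁(π/2) = v₃(π/2) = 0` must be
constant, equal to `(0,1,0)` or `(0,−1,0)`. -/
theorem stmt11 (v : ℝ → EuclideanSpace ℝ (Fin 3))
    (hreg1 : ContDiffOn ℝ 1 v (Icc 0 (π / 2)))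
    (hreg2 : ContDiffOn ℝ 2 v (Ioo 0 (π / 2)))
    (hunit : ∀ θ ∈ Icc 0 (π / 2), ‖v θ‖ = 1)
    (hode : ∀ θ ∈ Ioo 0 (π / 2),
      -(deriv (fun t => Real.sin t • deriv v t) θ) +
          (Real.sin θ)⁻¹ • vec3 (4 * v θ 0) 0 (v θ 2) =
        (‖deriv v θ‖ ^ 2 * Real.sin θ +
            (4 * (v θ 0) ^ 2 + (v θ 2) ^ 2) / Real.sin θ) • v θ)
    (hbc1 : v (π / 2) 0 = 0) (hbc3 : v (π / 2) 2 = 0) :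
    (∀ θ ∈ Icc 0 (π / 2), v θ = vec3 0 1 0) ∨
    (∀ θ ∈ Icc 0 (π / 2), v θ = vec3 0 (-1) 0) := by
  have hpi2 : (0:ℝ) < π/2 := by positivity
  have hJopen : IsOpen (Ioo (0:ℝ) (π/2)) := isOpen_Ioo
  have hJI : Ioo (0:ℝ) (π/2) ⊆ Icc 0 (π/2) := Ioo_subset_Icc_self
  have hmemI : ∀ {θ : ℝ}, θ ∈ Ioo (0:ℝ) (π/2) → Icc (0:ℝ) (π/2) ∈ 𝓝 θ :=
    fun h => Filter.mem_of_superset (hJopen.mem_nhds h) hJI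
  have hVcont : ContinuousOn (derivWithin v (Icc 0 (π/2))) (Icc 0 (π/2)) :=
    hreg1.continuousOn_derivWithin (uniqueDiffOn_Icc hpi2) le_rfl
  have hVeq : ∀ θ ∈ Ioo (0:ℝ) (π/2), derivWithin v (Icc 0 (π/2)) θ = deriv v θ :=
    fun θ hθ => derivWithin_of_mem_nhds (hmemI hθ)
  have hder : ∀ θ ∈ Ioo (0:ℝ) (π/2), HasDerivAt v (deriv v θ) θ := by
    intro θ hθ
    exact ((hreg1.differentiableOn one_ne_zero θ (hJI hθ)).differentiableAt (hmemI hθ)).hasDerivAt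
  have hder2 : ∀ θ ∈ Ioo (0:ℝ) (π/2), HasDerivAt (deriv v) (deriv (deriv v) θ) θ := by
    intro θ hθ
    have h := (hreg2.deriv_of_isOpen hJopen (m := 1) (by norm_num)).differentiableOn one_ne_zero
    exact ((h θ hθ).differentiableAt (hJopen.mem_nhds hθ)).hasDerivAt
  have hsinpos : ∀ θ ∈ Ioo (0:ℝ) (π/2), 0 < Real.sin θ := by
    intro θ hθ
    exact Real.sin_pos_of_pos_of_lt_pi hθ.1 (hθ.2.trans (by linarith [Real.pi_pos]))
  have horth : ∀ θ ∈ Ioo (0:ℝ) (π/2), ⟪v θ, deriv v θ⟫ = 0 := by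
    intro θ hθ
    have h1 : HasDerivAt (fun t => ⟪v t, v t⟫) (⟪v θ, deriv v θ⟫ + ⟪deriv v θ, v θ⟫) θ :=
      (hder θ hθ).inner ℝ (hder θ hθ)
    have h2 : (fun t => ⟪v t, v t⟫) =ᶠ[𝓝 θ] (fun _ => (1:ℝ)) := by
      filter_upwards [hmemI hθ] with t ht
      rw [real_inner_self_eq_norm_sq, hunit t ht]; norm_num
    have h3 := (hasDerivAt_const θ (1:ℝ)).unique (h1.congr_of_eventuallyEq h2.symm)
    have h4 := real_inner_comm (v θ) (deriv v θ)
    linarith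
  have hsmul : ∀ θ ∈ Ioo (0:ℝ) (π/2), HasDerivAt (fun t => Real.sin t • deriv v t)
      (Real.cos θ • deriv v θ + Real.sin θ • deriv (deriv v) θ) θ := by
    intro θ hθ
    have := (Real.hasDerivAt_sin θ).smul (hder2 θ hθ)
    rw [add_comm] at this
    exact this
  have hdot : ∀ θ ∈ Ioo (0:ℝ) (π/2),
      Real.cos θ * ⟪deriv v θ, deriv v θ⟫ + Real.sin θ * ⟪deriv (deriv v) θ, deriv v θ⟫
        = (Real.sin θ)⁻¹ * (4 * v θ 0 * deriv v θ 0 + v θ 2 * deriv v θ 2) := by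
    intro θ hθ
    have h := hode θ hθ
    rw [(hsmul θ hθ).deriv] at h
    have h2 := congrArg (fun x : EuclideanSpace ℝ (Fin 3) => ⟪x, deriv v θ⟫) h
    simp only [inner_add_left, inner_neg_left, real_inner_smul_left, inner_vec3_left] at h2
    rw [horth θ hθ] at h2
    ring_nf at h2 ⊢
    linarith
  -- the Pohozaev-type first integral
  have hW0 : derivWithin v (Icc 0 (π/2)) (π/2) = 0 := by
    set E : ℝ → ℝ := fun θ =>
      Real.sin θ^2 * ⟪derivWithin v (Icc 0 (π/2)) θ, derivWithin v (Icc 0 (π/2)) θ⟫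
        - (4*(v θ 0)^2 + (v θ 2)^2) with hEdef
    have hEcont : ContinuousOn E (Icc 0 (π/2)) := by
      apply ContinuousOn.sub
      · exact ((Real.continuous_sin.pow 2).continuousOn).mul (hVcont.inner hVcont)
      · apply ContinuousOn.add
        · exact continuousOn_const.mul
            (((EuclideanSpace.proj (𝕜 := ℝ) (0:Fin 3)).continuous.comp_continuousOn
              hreg1.continuousOn).pow 2)
        · exact ((EuclideanSpace.proj (𝕜 := ℝ) (2:Fin 3)).continuous.comp_continuousOn
            hreg1.continuousOn).pow 2
    have hE' : ∀ θ ∈ Ioo (0:ℝ) (π/2), HasDerivAt E 0 θ := by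
      intro θ hθ
      have hinn : HasDerivAt (fun t => ⟪deriv v t, deriv v t⟫)
          (⟪deriv v θ, deriv (deriv v) θ⟫ + ⟪deriv (deriv v) θ, deriv v θ⟫) θ :=
        (hder2 θ hθ).inner ℝ (hder2 θ hθ)
      have hEt := (((Real.hasDerivAt_sin θ).pow 2).mul hinn).sub
        ((((hasDerivAt_coord (hder θ hθ) 0).pow 2).const_mul 4).add
          ((hasDerivAt_coord (hder θ hθ) 2).pow 2))
      have hEt0 : HasDerivAt (fun t => Real.sin t^2 * ⟪deriv v t, deriv v t⟫
          - (4*(v t 0)^2 + (v t 2)^2)) 0 θ := by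
        refine hEt.congr_deriv (Eq.symm ?_)
        simp only [Pi.pow_apply]
        have hs : Real.sin θ ≠ 0 := (hsinpos θ hθ).ne'
        have hcan : Real.sin θ * (Real.sin θ)⁻¹ = 1 := mul_inv_cancel₀ hs
        have hcomm : ⟪deriv v θ, deriv (deriv v) θ⟫ = ⟪deriv (deriv v) θ, deriv v θ⟫ :=
          real_inner_comm _ _
        rw [hcomm]
        have hd := hdot θ hθ
        linear_combination (-(2:ℝ) * Real.sin θ) * hd
          - (2 * (4 * v θ 0 * deriv v θ 0 + v θ 2 * deriv v θ 2)) * hcan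
      have hEq : E =ᶠ[𝓝 θ] (fun t => Real.sin t^2 * ⟪deriv v t, deriv v t⟫
          - (4*(v t 0)^2 + (v t 2)^2)) := by
        filter_upwards [isOpen_Ioo.mem_nhds hθ] with t ht
        rw [hEdef]; simp only; rw [hVeq t ht]
      exact hEt0.congr_of_eventuallyEq hEq
    have hEconst : ∀ a ∈ Ioo (0:ℝ) (π/2), E (π/2) = E a := by
      intro a ha
      have hc := constant_of_has_deriv_right_zero (f := E) (a := a) (b := π/2)
        (hEcont.mono (Icc_subset_Icc ha.1.le le_rfl))
        (fun t ht => (hE' t ⟨lt_of_lt_of_le ha.1 ht.1, ht.2⟩).hasDerivWithinAt)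
      exact hc (π/2) (right_mem_Icc.2 ha.2.le)
    have hfil : 𝓝[>] (0:ℝ) ≤ 𝓝[Icc 0 (π/2)] 0 := by
      rw [← nhdsWithin_Ioc_eq_nhdsGT hpi2]
      exact nhdsWithin_mono _ Ioc_subset_Icc_self
    have hlim1 : Tendsto E (𝓝[>] (0:ℝ)) (𝓝 (E 0)) :=
      ((hEcont 0 (left_mem_Icc.2 hpi2.le)).mono_left hfil)
    have hlim2 : Tendsto E (𝓝[>] (0:ℝ)) (𝓝 (E (π/2))) := by
      apply Tendsto.congr' _ tendsto_const_nhds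
      filter_upwards [Ioo_mem_nhdsGT_of_mem ⟨le_refl (0:ℝ), hpi2⟩] with a ha
      exact hEconst a ha
    have hE0 : E 0 = E (π/2) := tendsto_nhds_unique hlim1 hlim2
    have hEpi : E (π/2) = ⟪derivWithin v (Icc 0 (π/2)) (π/2),
        derivWithin v (Icc 0 (π/2)) (π/2)⟫ := by
      rw [hEdef]; simp [Real.sin_pi_div_two, hbc1, hbc3]
    have hE00 : E 0 = -(4*(v 0 0)^2 + (v 0 2)^2) := by
      rw [hEdef]; simp [Real.sin_zero]
    rw [← real_inner_self_nonpos, ← hEpi, ← hE0, hE00]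
    nlinarith [sq_nonneg (v 0 0), sq_nonneg (v 0 2)]
  -- the boundary value of v
  have hc2 : |v (π/2) 1| = 1 := by
    have h1 := hunit (π/2) (right_mem_Icc.2 hpi2.le)
    have h2 : v (π/2) = vec3 0 (v (π/2) 1) 0 := by
      refine PiLp.ext fun i => ?_
      fin_cases i
      · exact hbc1
      · rfl
      · exact hbc3
    rw [h2, norm_vec3_eq] at h1
    rw [show (0:ℝ)^2 + (v (π/2) 1)^2 + 0^2 = (v (π/2) 1)^2 by ring,
      Real.sqrt_sq_eq_abs] at h1
    exact h1
  have hvpi : v (π/2) = vec3 0 (v (π/2) 1) 0 := by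
    refine PiLp.ext fun i => ?_
    fin_cases i
    · exact hbc1
    · rfl
    · exact hbc3
  set c : ℝ := v (π/2) 1 with hcdef
  set p₀ : EuclideanSpace ℝ (Fin 3) := vec3 0 c 0 with hp₀def
  have hp₀ : ‖p₀‖ = 1 := by
    rw [hp₀def, norm_vec3_eq, show (0:ℝ)^2 + c^2 + 0^2 = c^2 by ring,
      Real.sqrt_sq_eq_abs, hc2]
  -- Gronwall: v is constant on the open interval
  have hIoo : ∀ θ₀ ∈ Ioo (0:ℝ) (π/2), v θ₀ = p₀ := by
    intro θ₀ hθ₀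
    have hθ01 : (0:ℝ) < θ₀ := hθ₀.1
    set u : ℝ → EuclideanSpace ℝ (Fin 3) :=
      fun t => Real.sin t • derivWithin v (Icc 0 (π/2)) t with hudef
    have hs₀ : 0 < Real.sin θ₀ := hsinpos θ₀ hθ₀
    have hsge : ∀ θ ∈ Icc θ₀ (π/2), Real.sin θ₀ ≤ Real.sin θ := by
      intro θ hθ
      have h1 : θ₀ ∈ Icc (-(π/2)) (π/2) := ⟨by linarith, hθ₀.2.le⟩
      have h2 : θ ∈ Icc (-(π/2)) (π/2) := ⟨by linarith [hθ.1], hθ.2⟩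
      exact Real.strictMonoOn_sin.monotoneOn h1 h2 hθ.1
    have hucont : ContinuousOn u (Icc 0 (π/2)) := Real.continuous_sin.continuousOn.smul hVcont
    obtain ⟨M, hM⟩ := isCompact_Icc.exists_bound_of_continuousOn hucont
    have hM0 : 0 ≤ M := (norm_nonneg _).trans (hM (π/2) (right_mem_Icc.2 hpi2.le))
    set K : ℝ := (Real.sin θ₀)⁻¹ * (16 + M) with hKdef
    have hK0 : 0 ≤ K := by positivity
    have hd2 : ∀ θ ∈ Icc (0:ℝ) (π/2), ‖v θ - p₀‖ ≤ 2 := by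
      intro θ hθ
      calc ‖v θ - p₀‖ ≤ ‖v θ‖ + ‖p₀‖ := norm_sub_le _ _
        _ = 2 := by rw [hunit θ hθ, hp₀]; norm_num
    set T : ℝ := π/2 - θ₀ with hTdef
    have hT : 0 < T := by rw [hTdef]; linarith [hθ₀.2]
    set g : ℝ → EuclideanSpace ℝ (Fin 3) × EuclideanSpace ℝ (Fin 3) :=
      fun t => (v (π/2 - t) - p₀, u (π/2 - t)) with hgdef
    set GD : ℝ → EuclideanSpace ℝ (Fin 3) × EuclideanSpace ℝ (Fin 3) :=
      fun t => ((-1:ℝ) • deriv v (π/2 - t),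
        (-1:ℝ) • (Real.cos (π/2 - t) • deriv v (π/2 - t)
          + Real.sin (π/2 - t) • deriv (deriv v) (π/2 - t))) with hGDdef
    have hsub : Icc θ₀ (π/2) ⊆ Icc 0 (π/2) := Icc_subset_Icc hθ₀.1.le le_rfl
    have hmapsto : MapsTo (fun t : ℝ => π/2 - t) (Icc 0 T) (Icc 0 (π/2)) := by
      intro t ht
      have h1 : T = π/2 - θ₀ := rfl
      constructor
      · have := ht.2; rw [h1] at this; linarith
      · linarith [ht.1]
    have hgcont : ContinuousOn g (Icc 0 T) := by
      have hφ : ContinuousOn (fun t : ℝ => π/2 - t) (Icc 0 T) :=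
        (continuous_const.sub continuous_id).continuousOn
      exact ((hreg1.continuousOn.comp hφ hmapsto).sub continuousOn_const).prodMk
        (hucont.comp hφ hmapsto)
    have hkey : ∀ t, 0 < t → t < T → HasDerivAt g (GD t) t ∧ ‖GD t‖ ≤ K * ‖g t‖ := by
      intro t ht0 htT
      have hTeq : T = π/2 - θ₀ := rfl
      have htT' : t < π/2 - θ₀ := by rw [← hTeq]; exact htT
      obtain ⟨θ, hθg⟩ : ∃ θ : ℝ, θ = π/2 - t := ⟨_, rfl⟩
      have hθJ : θ ∈ Ioo (0:ℝ) (π/2) := ⟨by rw [hθg]; linarith, by rw [hθg]; linarith⟩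
      have hθI : θ ∈ Icc θ₀ (π/2) := ⟨by rw [hθg]; linarith, by rw [hθg]; linarith⟩
      have hsθ : 0 < Real.sin θ := hsinpos θ hθJ
      have hsθ₀ : Real.sin θ₀ ≤ Real.sin θ := hsge θ hθI
      have hφ : HasDerivAt (fun s : ℝ => π/2 - s) (-1) t := by
        exact (hasDerivAt_id' t).const_sub (π/2)
      have h1 : HasDerivAt (fun s => v (π/2 - s) - p₀) ((-1 : ℝ) • deriv v θ) t :=
        (HasDerivAt.scomp_of_eq t (hder θ hθJ) hφ hθg).sub_const p₀
      have huev : u =ᶠ[𝓝 θ] (fun x => Real.sin x • deriv v x) := by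
        filter_upwards [isOpen_Ioo.mem_nhds hθJ] with x hx
        rw [hudef]; simp only; rw [hVeq x hx]
      have hu_θ : HasDerivAt u (Real.cos θ • deriv v θ + Real.sin θ • deriv (deriv v) θ) θ :=
        (hsmul θ hθJ).congr_of_eventuallyEq huev
      have h2 : HasDerivAt (fun s => u (π/2 - s))
          ((-1 : ℝ) • (Real.cos θ • deriv v θ + Real.sin θ • deriv (deriv v) θ)) t :=
        HasDerivAt.scomp_of_eq t hu_θ hφ hθg
      constructor
      · rw [hGDdef]
        simp only [← hθg]
        exact h1.prodMk h2
      -- the norm bound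
      have hWu : u θ = Real.sin θ • deriv v θ := by rw [hudef]; simp only; rw [hVeq θ hθJ]
      have hnu : ‖u θ‖ = Real.sin θ * ‖deriv v θ‖ := by
        rw [hWu, norm_smul, Real.norm_eq_abs, abs_of_pos hsθ]
      have hgt1 : ‖v θ - p₀‖ ≤ ‖g t‖ := by
        rw [hgdef]; simp only [← hθg]; exact norm_fst_le (v θ - p₀, u θ)
      have hgt2 : ‖u θ‖ ≤ ‖g t‖ := by
        rw [hgdef]; simp only [← hθg]; exact norm_snd_le (v θ - p₀, u θ)
      have hg0 : 0 ≤ ‖g t‖ := norm_nonneg _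
      have hdv : ‖deriv v θ‖ ≤ (Real.sin θ₀)⁻¹ * ‖u θ‖ := by
        rw [hnu, ← mul_assoc]
        have h3 : (1:ℝ) ≤ (Real.sin θ₀)⁻¹ * Real.sin θ := by
          rw [inv_mul_eq_div, le_div_iff₀ hs₀, one_mul]
          exact hsθ₀
        nlinarith [norm_nonneg (deriv v θ)]
      have hode' := hode θ hθJ
      rw [(hsmul θ hθJ).deriv] at hode'
      have hWd : Real.cos θ • deriv v θ + Real.sin θ • deriv (deriv v) θ
          = (Real.sin θ)⁻¹ • vec3 (4 * v θ 0) 0 (v θ 2)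
            - (‖deriv v θ‖ ^ 2 * Real.sin θ + (4 * (v θ 0) ^ 2 + (v θ 2) ^ 2) / Real.sin θ)
              • v θ := by
        rw [← hode']; abel
      have hlam0 : 0 ≤ ‖deriv v θ‖ ^ 2 * Real.sin θ
          + (4 * (v θ 0) ^ 2 + (v θ 2) ^ 2) / Real.sin θ := by
        have h4 : 0 ≤ ‖deriv v θ‖^2 * Real.sin θ := mul_nonneg (sq_nonneg _) hsθ.le
        have h5 : 0 ≤ (4*(v θ 0)^2 + (v θ 2)^2) / Real.sin θ := div_nonneg (by positivity) hsθ.le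
        linarith
      have hco0 : |v θ 0| ≤ ‖v θ - p₀‖ := by
        have h6 := abs_coord_le (v θ - p₀) 0
        have h7 : (v θ - p₀) 0 = v θ 0 := by simp [hp₀def, vec3]
        rwa [h7] at h6
      have hco2 : |v θ 2| ≤ ‖v θ - p₀‖ := by
        have h6 := abs_coord_le (v θ - p₀) 2
        have h7 : (v θ - p₀) 2 = v θ 2 := by simp [hp₀def, vec3]
        rwa [h7] at h6
      have habs0 : 0 ≤ ‖v θ - p₀‖ := norm_nonneg _
      have hw : ‖vec3 (4 * v θ 0) 0 (v θ 2)‖ ≤ 5 * ‖v θ - p₀‖ := by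
        calc ‖vec3 (4 * v θ 0) 0 (v θ 2)‖ ≤ |4 * v θ 0| + |v θ 2| := norm_vec3_le _ _
          _ = 4 * |v θ 0| + |v θ 2| := by rw [abs_mul]; norm_num
          _ ≤ 5 * ‖v θ - p₀‖ := by linarith
      have hvn : ‖v θ‖ = 1 := hunit θ (hsub hθI)
      have hdθ2 : ‖v θ - p₀‖ ≤ 2 := hd2 θ (hsub hθI)
      have huM : ‖u θ‖ ≤ M := hM θ (hsub hθI)
      have hlam_le := lam_bound ‖deriv v θ‖ (Real.sin θ) (Real.sin θ₀) (v θ 0) (v θ 2)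
        ‖v θ - p₀‖ ‖u θ‖ M hsθ hs₀ hsθ₀ hnu (norm_nonneg _) hdv huM hco0 hco2 hdθ2
      have hcomp2 := gd_bound (vec3 (4 * v θ 0) 0 (v θ 2)) (v θ)
        (Real.sin θ) (Real.sin θ₀)
        (‖deriv v θ‖ ^ 2 * Real.sin θ + (4 * (v θ 0) ^ 2 + (v θ 2) ^ 2) / Real.sin θ)
        M ‖v θ - p₀‖ ‖u θ‖ ‖g t‖ hsθ hs₀ hsθ₀ hlam0 hw hvn hlam_le habs0 (norm_nonneg _)
        hM0 hg0 hgt1 hgt2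
      have hcomp1 := gd_bound1 (deriv v θ) (Real.sin θ₀) M ‖u θ‖ ‖g t‖ hs₀ hdv hgt2 hM0 hg0
      rw [hGDdef]
      simp only [← hθg]
      rw [Prod.norm_def]
      simp only [neg_one_smul, norm_neg]
      rw [← hKdef] at hcomp1 hcomp2
      rw [← hWd] at hcomp2
      exact max_le hcomp1 hcomp2
    -- Gronwall estimate from ε to T, then ε → 0
    have hmain : ∀ ε ∈ Ioo (0:ℝ) T, ‖g T‖ ≤ ‖g ε‖ * Real.exp (K * T) := by
      intro ε hε
      have hder' : ∀ x ∈ Ico ε T, HasDerivWithinAt g (GD x) (Ici x) x :=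
        fun x hx => ((hkey x (hε.1.trans_le hx.1) hx.2).1).hasDerivWithinAt
      have hbound : ∀ x ∈ Ico ε T, ‖GD x‖ ≤ K * ‖g x‖ + 0 := by
        intro x hx
        rw [add_zero]
        exact (hkey x (hε.1.trans_le hx.1) hx.2).2
      have hres := norm_le_gronwallBound_of_norm_deriv_right_le
        (hgcont.mono (Icc_subset_Icc hε.1.le le_rfl)) hder' le_rfl hbound T
        (right_mem_Icc.2 hε.2.le)
      rw [gronwallBound_ε0] at hres
      calc ‖g T‖ ≤ ‖g ε‖ * Real.exp (K * (T - ε)) := hres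
        _ ≤ ‖g ε‖ * Real.exp (K * T) := by
            apply mul_le_mul_of_nonneg_left _ (norm_nonneg _)
            apply Real.exp_le_exp.2
            nlinarith [hε.1]
    have hgz : g 0 = 0 := by
      rw [hgdef]
      simp only [sub_zero]
      rw [hudef]
      simp only
      rw [hvpi, hW0]
      simp
    have hfilT : 𝓝[>] (0:ℝ) ≤ 𝓝[Icc 0 T] 0 := by
      rw [← nhdsWithin_Ioc_eq_nhdsGT hT]
      exact nhdsWithin_mono _ Ioc_subset_Icc_self
    have htend : Tendsto (fun ε => ‖g ε‖ * Real.exp (K * T)) (𝓝[>] (0:ℝ)) (𝓝 0) := by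
      have h1 : Tendsto g (𝓝[>] (0:ℝ)) (𝓝 (g 0)) :=
        (hgcont 0 (left_mem_Icc.2 hT.le)).mono_left hfilT
      have h2 : Tendsto (fun ε => ‖g ε‖ * Real.exp (K * T)) (𝓝[>] (0:ℝ))
          (𝓝 (‖g 0‖ * Real.exp (K * T))) := (h1.norm).mul_const _
      rw [hgz] at h2
      simpa using h2
    have hgT : ‖g T‖ ≤ 0 := by
      apply ge_of_tendsto htend
      filter_upwards [Ioo_mem_nhdsGT_of_mem ⟨le_refl (0:ℝ), hT⟩] with ε hε
      exact hmain ε hε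
    have hgTz : g T = 0 := by rwa [← norm_le_zero_iff]
    have h5 : v (π/2 - T) - p₀ = 0 := by
      have h6 := congrArg Prod.fst hgTz
      rw [hgdef] at h6
      exact h6
    have h7 : π/2 - T = θ₀ := by rw [hTdef]; ring
    rw [h7] at h5
    exact sub_eq_zero.mp h5
  -- assemble on the closed interval
  have hall : ∀ θ ∈ Icc (0:ℝ) (π/2), v θ = p₀ := by
    intro θ hθ
    rcases eq_or_lt_of_le hθ.1 with h0 | h0
    · -- θ = 0 : by continuity
      subst h0
      have h1 : Tendsto v (𝓝[>] (0:ℝ)) (𝓝 (v 0)) := by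
        have hfil : 𝓝[>] (0:ℝ) ≤ 𝓝[Icc 0 (π/2)] 0 := by
          rw [← nhdsWithin_Ioc_eq_nhdsGT hpi2]
          exact nhdsWithin_mono _ Ioc_subset_Icc_self
        exact (hreg1.continuousOn 0 (left_mem_Icc.2 hpi2.le)).mono_left hfil
      have h2 : Tendsto v (𝓝[>] (0:ℝ)) (𝓝 p₀) := by
        apply Tendsto.congr' _ tendsto_const_nhds
        filter_upwards [Ioo_mem_nhdsGT_of_mem ⟨le_refl (0:ℝ), hpi2⟩] with a ha
        exact (hIoo a ha).symm
      exact tendsto_nhds_unique h1 h2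
    rcases eq_or_lt_of_le hθ.2 with h1 | h1
    · rw [h1]; exact hvpi
    · exact hIoo θ ⟨h0, h1⟩
  -- conclude, splitting on the sign of c
  rcases abs_eq (by norm_num : (0:ℝ) ≤ 1) |>.mp hc2 with hcc | hcc
  · left
    intro θ hθ
    rw [hall θ hθ, hp₀def, hcc]
  · right
    intro θ hθ
    rw [hall θ hθ, hp₀def, hcc]
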